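/- (dSAGA convergence, Lemma 1) Assume each local objective is f_k(w) = (1/2)(w - w_k*)^T H_k(w - w_k*) with H_k positive definite, the synchronization rule is w_k^{t,0} = (1/K) Σ_l w_l^{t-1,∞}, the inner fixed-point relation g_k(w_k^{t,∞}) = g_k(w_k^{t,0}) - (1/K) Σ_l g_l(w_l^{t-1,∞}) holds (where g_k(w) = H_k(w - w_k*)), and max_{k,l} ‖I - H_k^{-1}H_l‖ ≤ ρ < 1. Then for all t, max_k ‖w_k^{t,∞} - w*‖ ≤ ((1 - 1/K) ρ)^t · max_l ‖w_l^{0,∞} - w*‖, where w* is the minimizer of f = (1/K) Σ_k f_k. -/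

import Mathlib

/-!
Subtracting the fixed-point relation written at `w*`, where the summed gradient vanishes by the
first-order optimality condition, turns the dSAGA round into the error recurrence
`e_k^{t+1} = (1/K) ∑_l (I - H_k⁻¹ H_l) e_l^t`. Its diagonal term `l = k` vanishes, and each of the
remaining `K - 1` terms has norm at most `ρ max_l ‖e_l^t‖`, so the maximal error contracts by the
factor `(1 - 1/K) ρ` in every round.
-/

open Matrix Finset
open scoped Matrix.Norms.L2Operator RealInnerProductSpace

section FirstOrderCondition

variable {E ι : Type*} [NormedAddCommGroup E] [InnerProductSpace ℝ E] [Fintype ι]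

lemma eq_zero_of_forall_mul_add_sq_mul_nonneg {a b : ℝ} (h : ∀ ε : ℝ, 0 ≤ ε * a + ε ^ 2 * b) :
    a = 0 := by
  have hmin : IsLocalMin (fun ε : ℝ => ε * a + ε ^ 2 * b) 0 :=
    Filter.Eventually.of_forall fun ε => by simpa using h ε
  simpa using hmin.hasDerivAt_eq_zero
    (((hasDerivAt_id' (0 : ℝ)).mul_const a).fun_add ((hasDerivAt_pow 2 (0 : ℝ)).mul_const b))

lemma LinearMap.IsSymmetric.inner_add_smul_map_add_smul {A : E →ₗ[ℝ] E} (hA : A.IsSymmetric)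
    (x v : E) (ε : ℝ) :
    ⟪x + ε • v, A (x + ε • v)⟫ = ⟪x, A x⟫ + ε * (2 * ⟪v, A x⟫) + ε ^ 2 * ⟪v, A v⟫ := by
  have hswap : ⟪x, A v⟫ = ⟪v, A x⟫ := by rw [← hA, real_inner_comm]
  simp only [map_add, map_smul, inner_add_left, inner_add_right, real_inner_smul_left,
    real_inner_smul_right, hswap]
  ring

lemma LinearMap.IsSymmetric.sum_apply_sub_eq_zero_of_forall_le {A : ι → E →ₗ[ℝ] E}
    (hA : ∀ k, (A k).IsSymmetric) {a : ι → E} {x : E}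
    (hmin : ∀ y, ∑ k, ⟪x - a k, A k (x - a k)⟫ ≤ ∑ k, ⟪y - a k, A k (y - a k)⟫) :
    ∑ k, A k (x - a k) = 0 := by
  set G := ∑ k, A k (x - a k) with hG
  suffices 2 * ⟪G, G⟫ = 0 by simpa using this
  refine eq_zero_of_forall_mul_add_sq_mul_nonneg (b := ⟪G, ∑ k, A k G⟫) fun ε => ?_
  have h := hmin (x + ε • G)
  have hshift : ∀ k, x + ε • G - a k = (x - a k) + ε • G := fun k => by abel
  simp only [hshift, (hA _).inner_add_smul_map_add_smul, sum_add_distrib, ← mul_sum,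
    ← inner_sum, ← hG] at h
  linarith

end FirstOrderCondition

lemma smul_sum_sub_eq_smul_sum_sub {𝕜 ι V : Type*} [DivisionRing 𝕜] [CharZero 𝕜] [AddCommGroup V]
    [Module 𝕜 V] [Fintype ι] [Nonempty ι] (v : ι → V) (u : V) :
    (1 / (Fintype.card ι : 𝕜)) • ∑ l, v l - u = (1 / (Fintype.card ι : 𝕜)) • ∑ l, (v l - u) := by
  rw [sum_sub_distrib, smul_sub, sum_const, card_univ, ← Nat.cast_smul_eq_nsmul 𝕜, smul_smul,
    one_div_mul_cancel (Nat.cast_ne_zero.2 Fintype.card_ne_zero), one_smul]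

lemma norm_sum_le_of_apply_eq_zero {ι F : Type*} [Fintype ι] [SeminormedAddCommGroup F]
    {f : ι → F} {k : ι} (hk : f k = 0) {C : ℝ} (hC : ∀ l, ‖f l‖ ≤ C) :
    ‖∑ l, f l‖ ≤ (Fintype.card ι - 1) * C := by
  classical
  calc ‖∑ l, f l‖ = ‖∑ l ∈ univ.erase k, f l‖ := by rw [sum_erase _ hk]
    _ ≤ ∑ l ∈ univ.erase k, ‖f l‖ := norm_sum_le _ _
    _ ≤ ∑ _l ∈ univ.erase k, C := sum_le_sum fun l _ => hC l
    _ = (Fintype.card ι - 1) * C := by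
      rw [sum_const, card_erase_of_mem (mem_univ k), card_univ, nsmul_eq_mul,
        Nat.cast_pred (Fintype.card_pos_iff.2 ⟨k⟩)]

section ErrorRecurrence

variable {𝕜 ι n : Type*} [RCLike 𝕜] [Fintype ι] [Fintype n] [DecidableEq n]

lemma Matrix.toEuclideanLin_nonsing_inv_apply {A : Matrix n n 𝕜} (hA : IsUnit A.det)
    (x : EuclideanSpace 𝕜 n) : toEuclideanLin A⁻¹ (toEuclideanLin A x) = x := by
  rw [← LinearMap.comp_apply, ← toLpLin_mul_same, nonsing_inv_mul _ hA, toLpLin_one,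
    LinearMap.id_apply]

lemma dsaga_error_eq [Nonempty ι] {H : ι → Matrix n n 𝕜} (hH : ∀ k, IsUnit (H k).det)
    {wopt : ι → EuclideanSpace 𝕜 n} {wstar : EuclideanSpace 𝕜 n}
    (hopt : ∑ l, toEuclideanLin (H l) (wstar - wopt l) = 0)
    {w : ι → EuclideanSpace 𝕜 n} {w' : EuclideanSpace 𝕜 n} {k : ι}
    (hw' : toEuclideanLin (H k) (w' - wopt k) =
      toEuclideanLin (H k) ((1 / (Fintype.card ι : 𝕜)) • ∑ l, w l - wopt k) -
        (1 / (Fintype.card ι : 𝕜)) • ∑ l, toEuclideanLin (H l) (w l - wopt l)) :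
    w' - wstar = (1 / (Fintype.card ι : 𝕜)) •
      ∑ l, toEuclideanLin (1 - (H k)⁻¹ * H l) (w l - wstar) := by
  have hsplit : ∀ (u : EuclideanSpace 𝕜 n) l, u - wopt l = (u - wstar) + (wstar - wopt l) :=
    fun u l => by abel
  have hgrad : ∑ l, toEuclideanLin (H l) (w l - wopt l) =
      ∑ l, toEuclideanLin (H l) (w l - wstar) := by
    simp only [fun l => hsplit (w l) l, map_add, sum_add_distrib, hopt, add_zero]
  rw [hsplit w' k, hsplit (_ • ∑ l, w l) k, smul_sum_sub_eq_smul_sum_sub, hgrad, map_add,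
    map_add, add_sub_right_comm, add_left_inj] at hw'
  have hterm : ∀ l v, toEuclideanLin (H k) (toEuclideanLin (1 - (H k)⁻¹ * H l) v) =
      toEuclideanLin (H k) v - toEuclideanLin (H l) v := fun l v => by
    rw [← LinearMap.comp_apply, ← toLpLin_mul_same, mul_sub, mul_one, ← mul_assoc,
      mul_nonsing_inv _ (hH k), one_mul, map_sub, LinearMap.sub_apply]
  apply (Function.LeftInverse.injective (toEuclideanLin_nonsing_inv_apply (hH k)))
  rw [hw', map_smul, map_sum, map_smul, map_sum]
  simp only [hterm, sum_sub_distrib, smul_sub]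

theorem dsaga_iSup_error_le [Nonempty ι] {H : ι → Matrix n n 𝕜} (hH : ∀ k, IsUnit (H k).det)
    {wopt : ι → EuclideanSpace 𝕜 n} {wstar : EuclideanSpace 𝕜 n}
    (hopt : ∑ l, toEuclideanLin (H l) (wstar - wopt l) = 0)
    {w w' : ι → EuclideanSpace 𝕜 n}
    (hw' : ∀ k, toEuclideanLin (H k) (w' k - wopt k) =
      toEuclideanLin (H k) ((1 / (Fintype.card ι : 𝕜)) • ∑ l, w l - wopt k) -
        (1 / (Fintype.card ι : 𝕜)) • ∑ l, toEuclideanLin (H l) (w l - wopt l))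
    {ρ : ℝ} (hρ : ∀ k l, ‖(1 : Matrix n n 𝕜) - (H k)⁻¹ * H l‖ ≤ ρ) :
    ⨆ k, ‖w' k - wstar‖ ≤ (1 - 1 / (Fintype.card ι : ℝ)) * ρ * ⨆ l, ‖w l - wstar‖ := by
  have hρ0 : 0 ≤ ρ := (norm_nonneg _).trans (hρ (Classical.arbitrary ι) (Classical.arbitrary ι))
  have hM : ∀ l, ‖w l - wstar‖ ≤ ⨆ l, ‖w l - wstar‖ := le_ciSup (Finite.bddAbove_range _)
  refine ciSup_le fun k => ?_
  have hsum := norm_sum_le_of_apply_eq_zero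
    (f := fun l => toEuclideanLin (1 - (H k)⁻¹ * H l) (w l - wstar)) (k := k)
    (by simp [nonsing_inv_mul _ (hH k)])
    fun l => (l2_opNorm_mulVec _ _).trans (mul_le_mul (hρ k l) (hM l) (norm_nonneg _) hρ0)
  rw [dsaga_error_eq hH hopt (hw' k), norm_smul, norm_div, norm_one, RCLike.norm_natCast]
  calc 1 / (Fintype.card ι : ℝ) * ‖∑ l, toEuclideanLin (1 - (H k)⁻¹ * H l) (w l - wstar)‖
      ≤ 1 / (Fintype.card ι : ℝ) * ((Fintype.card ι - 1) * (ρ * ⨆ l, ‖w l - wstar‖)) :=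
        mul_le_mul_of_nonneg_left hsum (by positivity)
    _ = (1 - 1 / (Fintype.card ι : ℝ)) * ρ * ⨆ l, ‖w l - wstar‖ := by field_simp

end ErrorRecurrence

theorem dsaga_convergence_general (d K : ℕ)
    (H : Fin K → Matrix (Fin d) (Fin d) ℝ) (hH : ∀ k, (H k).PosDef)
    (wopt : Fin K → EuclideanSpace ℝ (Fin d))
    (g : Fin K → EuclideanSpace ℝ (Fin d) → EuclideanSpace ℝ (Fin d))
    (hg : ∀ k v, g k v = (Matrix.toEuclideanLin (H k)) (v - wopt k))
    (wstar : EuclideanSpace ℝ (Fin d))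
    (hmin : ∀ w : EuclideanSpace ℝ (Fin d),
      (1 / (K : ℝ)) * ∑ k, (1 / 2) * inner ℝ (wstar - wopt k) (g k wstar) ≤
      (1 / (K : ℝ)) * ∑ k, (1 / 2) * (inner ℝ (w - wopt k) (g k w) : ℝ))
    (w : ℕ → Fin K → EuclideanSpace ℝ (Fin d))
    (hfix : ∀ t k,
      g k (w (t + 1) k) =
        g k ((1 / (K : ℝ)) • ∑ l, w t l) - (1 / (K : ℝ)) • ∑ l, g l (w t l))
    (ρ : ℝ) (hρ : ∀ k l, ‖(1 : Matrix (Fin d) (Fin d) ℝ) - (H k)⁻¹ * H l‖ ≤ ρ) :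
    ∀ t : ℕ, (⨆ k, ‖w t k - wstar‖) ≤
      ((1 - 1 / (K : ℝ)) * ρ) ^ t * ⨆ l, ‖w 0 l - wstar‖ := by
  intro t
  rcases isEmpty_or_nonempty (Fin K) with hK | hK
  · simp
  have hK1 : (1 : ℝ) ≤ K := Nat.one_le_cast.2 (Fin.pos_iff_nonempty.2 hK)
  have hopt : ∑ l, toEuclideanLin (H l) (wstar - wopt l) = 0 :=
    LinearMap.IsSymmetric.sum_apply_sub_eq_zero_of_forall_le
      (fun k => isSymmetric_toEuclideanLin_iff.mpr (hH k).isHermitian) fun y =>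
        le_of_mul_le_mul_left (by simpa only [hg, ← mul_sum, ← mul_assoc] using hmin y)
          (by positivity)
  have hstep : ∀ s, ⨆ k, ‖w (s + 1) k - wstar‖ ≤ (1 - 1 / (K : ℝ)) * ρ * ⨆ l, ‖w s l - wstar‖ :=
    fun s => by
      simpa only [Fintype.card_fin] using dsaga_iSup_error_le
        (fun k => (H k).isUnit_iff_isUnit_det.mp (hH k).isUnit) hopt
        (fun k => by simpa only [hg, Fintype.card_fin] using hfix s k) hρ
  have hrate : 0 ≤ (1 - 1 / (K : ℝ)) * ρ :=
    mul_nonneg (sub_nonneg.2 (div_le_one_of_le₀ hK1 (by positivity)))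
      ((norm_nonneg _).trans (hρ hK.some hK.some))
  exact le_geom (u := fun s => ⨆ k, ‖w s k - wstar‖) hrate t fun s _ => hstep s

/-- dSAGA convergence (Lemma 1): quadratic local losses `f_k(w) = ½(w-w_k*)ᵀH_k(w-w_k*)` with
`H_k` positive definite, synchronization `w_k^{t,0} = (1/K) Σ_l w_l^{t-1,∞}`, inner fixed-point
relation `g_k(w_k^{t,∞}) = g_k(w_k^{t,0}) - (1/K) Σ_l g_l(w_l^{t-1,∞})`, and
`max_{k,l} ‖I - H_k⁻¹H_l‖ ≤ ρ < 1` imply geometric convergence of `max_k ‖w_k^{t,∞} - w*‖`. -/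
theorem dsaga_convergence (d K : ℕ) (hK : 0 < K)
    (H : Fin K → Matrix (Fin d) (Fin d) ℝ) (hH : ∀ k, (H k).PosDef)
    (wopt : Fin K → EuclideanSpace ℝ (Fin d))
    (g : Fin K → EuclideanSpace ℝ (Fin d) → EuclideanSpace ℝ (Fin d))
    (hg : ∀ k v, g k v = (Matrix.toEuclideanLin (H k)) (v - wopt k))
    (wstar : EuclideanSpace ℝ (Fin d))
    (hmin : ∀ w : EuclideanSpace ℝ (Fin d),
      (1 / (K : ℝ)) * ∑ k, (1 / 2) * inner ℝ (wstar - wopt k) (g k wstar) ≤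
      (1 / (K : ℝ)) * ∑ k, (1 / 2) * (inner ℝ (w - wopt k) (g k w) : ℝ))
    (w : ℕ → Fin K → EuclideanSpace ℝ (Fin d))
    (hfix : ∀ t k,
      g k (w (t + 1) k) =
        g k ((1 / (K : ℝ)) • ∑ l, w t l) - (1 / (K : ℝ)) • ∑ l, g l (w t l))
    (ρ : ℝ) (hρ1 : ρ < 1) (hρ : ∀ k l, ‖(1 : Matrix (Fin d) (Fin d) ℝ) - (H k)⁻¹ * H l‖ ≤ ρ) :
    ∀ t : ℕ, (⨆ k, ‖w t k - wstar‖) ≤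
      ((1 - 1 / (K : ℝ)) * ρ) ^ t * ⨆ l, ‖w 0 l - wstar‖ :=
  dsaga_convergence_general d K H hH wopt g hg wstar hmin w hfix ρ hρ
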